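/- Let S1 : D1 → ℤ_{≥0} be a horizontal grading on the maximal Dyck path D_{a1,a2}. Then the shadow sh(S1) and remote shadow rsh(S1) satisfy: (i) a vertical grading S2 : D2 → ℤ_{≥0} is compatible with S1 if and only if S2(v) = 0 for all v ∈ sh(S1) ∖ rsh(S1) and for each h ∈ supp(S1) and each v ∈ rsh(S1) at least one of the conditions (HGC), (VGC) is satisfied; and (ii) |sh(S1)| = min(a2, |S1|). Symmetrically, for a vertical grading S2 the sets rsh(S2) ⊆ sh(S2) ⊆ D1 satisfy the analogous characterization of C(S2) and |sh(S2)| = min(a1, |S2|). -/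

import Mathlib

open scoped Classical
noncomputable section

namespace Dyck

/-- The edges of the maximal Dyck path `D_{a,b}`: `a` horizontal edges
`h_1, …, h_a` (0-indexed here) and `b` vertical edges `v_1, …, v_b`. -/
abbrev Edge (a b : ℕ) := Fin a ⊕ Fin b

/-- The height of the horizontal edge `h_{j+1}` of `D_{a,b}` is `⌊j·b/a⌋`. -/
def ht (a b : ℕ) (j : Fin a) : ℕ := j.1 * b / a

/-- The depth of the vertical edge `v_{j+1}` of `D_{a,b}` is `⌈(j+1)·a/b⌉`. -/
def dep (a b : ℕ) (j : Fin b) : ℕ := ((j.1 + 1) * a + b - 1) / b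

/-- The position (0-indexed) of an edge along the maximal Dyck path `D_{a,b}`:
a horizontal edge `h_{j+1}` is preceded by `j` horizontal edges and by `ht j`
vertical edges; a vertical edge `v_{j+1}` is preceded by `j` vertical edges and
by `dep j` horizontal edges. -/
def pos (a b : ℕ) : Edge a b → ℕ
  | Sum.inl j => j.1 + ht a b j
  | Sum.inr j => j.1 + dep a b j

/-- Cyclic distance from `e` to `f` along the closed loop `D_{a,b}`
(the endpoints `(0,0)` and `(a,b)` are identified). -/
def dd (a b : ℕ) (e f : Edge a b) : ℕ := (pos a b f + (a + b) - pos a b e) % (a + b)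

/-- The (cyclic) subpath of `D_{a,b}` from `e` to `f`, both included. -/
def subpath (a b : ℕ) (e f : Edge a b) : Finset (Edge a b) :=
  Finset.univ.filter fun g => dd a b e g ≤ dd a b e f

/-- The number of horizontal edges in a set of edges. -/
def hcount (a b : ℕ) (s : Finset (Edge a b)) : ℕ := (s.filter fun e => e.isLeft = true).card

/-- The number of vertical edges in a set of edges. -/
def vcount (a b : ℕ) (s : Finset (Edge a b)) : ℕ := (s.filter fun e => e.isRight = true).card

/-- The sum of a horizontal grading over the horizontal edges of a set of edges. -/
def hsum (a b : ℕ) (S1 : Fin a → ℕ) (s : Finset (Edge a b)) : ℕ :=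
  ∑ e ∈ s, Sum.elim S1 (fun _ => 0) e

/-- The sum of a vertical grading over the vertical edges of a set of edges. -/
def vsum (a b : ℕ) (S2 : Fin b → ℕ) (s : Finset (Edge a b)) : ℕ :=
  ∑ e ∈ s, Sum.elim (fun _ => 0) S2 e

/-- The horizontal shadow statistic `f_{S1}` of a set of edges. -/
def fH (a b : ℕ) (S1 : Fin a → ℕ) (s : Finset (Edge a b)) : ℤ :=
  (hsum a b S1 s : ℤ) - (vcount a b s : ℤ)

/-- The vertical shadow statistic `f_{S2}` of a set of edges. -/
def fV (a b : ℕ) (S2 : Fin b → ℕ) (s : Finset (Edge a b)) : ℤ :=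
  (vsum a b S2 s : ℤ) - (hcount a b s : ℤ)

/-- Horizontal grading condition (HGC) for the pair `(h, v)`: there is an edge `e`
with `he` a proper subpath of `hv` and `|(he)_2| = Σ_{h' ∈ (he)_1} S1(h')`. -/
def HGC (a b : ℕ) (S1 : Fin a → ℕ) (h : Fin a) (v : Fin b) : Prop :=
  ∃ e : Edge a b, dd a b (.inl h) e < dd a b (.inl h) (.inr v) ∧
    vcount a b (subpath a b (.inl h) e) = hsum a b S1 (subpath a b (.inl h) e)

/-- Vertical grading condition (VGC) for the pair `(h, v)`: there is an edge `e`
with `ev` a proper subpath of `hv` and `|(ev)_1| = Σ_{v' ∈ (ev)_2} S2(v')`. -/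
def VGC (a b : ℕ) (S2 : Fin b → ℕ) (h : Fin a) (v : Fin b) : Prop :=
  ∃ e : Edge a b, 0 < dd a b (.inl h) e ∧ dd a b (.inl h) e ≤ dd a b (.inl h) (.inr v) ∧
    hcount a b (subpath a b e (.inr v)) = vsum a b S2 (subpath a b e (.inr v))

/-- A pair of gradings `(S1, S2)` on `D_{a,b}` is compatible. -/
def Compatible (a b : ℕ) (S1 : Fin a → ℕ) (S2 : Fin b → ℕ) : Prop :=
  ∀ (h : Fin a) (v : Fin b), HGC a b S1 h v ∨ VGC a b S2 h v

/-- `e` is a "balanced" endpoint for the horizontal edge `h`: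
`|(he)_2| = Σ_{h' ∈ (he)_1} S1(h')`. -/
def balH (a b : ℕ) (S1 : Fin a → ℕ) (h : Fin a) (e : Edge a b) : Prop :=
  vcount a b (subpath a b (.inl h) e) = hsum a b S1 (subpath a b (.inl h) e)

/-- The local shadow `sh(h; S1)`: the vertical edges of the shortest balanced
subpath starting at `h` (all of `D2` if there is none). -/
def shH (a b : ℕ) (S1 : Fin a → ℕ) (h : Fin a) : Finset (Fin b) :=
  Finset.univ.filter fun v =>
    ∀ e : Edge a b, balH a b S1 h e → dd a b (.inl h) (.inr v) ≤ dd a b (.inl h) e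

/-- The shadow `sh(S1) = ⋃_h sh(h; S1)`. -/
def shadowH (a b : ℕ) (S1 : Fin a → ℕ) : Finset (Fin b) :=
  Finset.univ.filter fun v => ∃ h : Fin a, v ∈ shH a b S1 h

/-- The vertical edges removed from `sh(S1)` to form the remote shadow: for each
`d ∈ [1,a]`, the (up to) `S1(h_d)` vertical edges of depth `d` immediately
following `h_d`. -/
def removedH (a b : ℕ) (S1 : Fin a → ℕ) : Finset (Fin b) :=
  Finset.univ.filter fun v => ∃ hd : Fin a, hd.1 + 1 = dep a b v ∧
    (Finset.univ.filter fun v' : Fin b => dep a b v' = dep a b v ∧ v'.1 < v.1).card < S1 hd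

/-- The remote shadow `rsh(S1)`. -/
def rshH (a b : ℕ) (S1 : Fin a → ℕ) : Finset (Fin b) :=
  shadowH a b S1 \ removedH a b S1

/-- `e` is a "balanced" starting point for the vertical edge `v`:
`|(ev)_1| = Σ_{v' ∈ (ev)_2} S2(v')`. -/
def balV (a b : ℕ) (S2 : Fin b → ℕ) (e : Edge a b) (v : Fin b) : Prop :=
  hcount a b (subpath a b e (.inr v)) = vsum a b S2 (subpath a b e (.inr v))

/-- The local shadow `sh(v; S2)`: the horizontal edges of the shortest balanced
subpath ending at `v` (all of `D1` if there is none). -/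
def shV (a b : ℕ) (S2 : Fin b → ℕ) (v : Fin b) : Finset (Fin a) :=
  Finset.univ.filter fun h =>
    ∀ e : Edge a b, balV a b S2 e v → dd a b (.inl h) (.inr v) ≤ dd a b e (.inr v)

/-- The shadow `sh(S2) = ⋃_v sh(v; S2)`. -/
def shadowV (a b : ℕ) (S2 : Fin b → ℕ) : Finset (Fin a) :=
  Finset.univ.filter fun h => ∃ v : Fin b, h ∈ shV a b S2 v

/-- The horizontal edges removed from `sh(S2)` to form the remote shadow: for each
`ℓ ∈ [1,b]`, the (up to) `S2(v_ℓ)` horizontal edges of height `ℓ−1` immediately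
preceding `v_ℓ`. -/
def removedV (a b : ℕ) (S2 : Fin b → ℕ) : Finset (Fin a) :=
  Finset.univ.filter fun h => ∃ vl : Fin b, vl.1 = ht a b h ∧
    (Finset.univ.filter fun h' : Fin a => ht a b h' = ht a b h ∧ h.1 < h'.1).card < S2 vl

/-- The remote shadow `rsh(S2)`. -/
def rshV (a b : ℕ) (S2 : Fin b → ℕ) : Finset (Fin a) :=
  shadowV a b S2 \ removedV a b S2

/-- The support of a grading. -/
def suppH (a : ℕ) (S1 : Fin a → ℕ) : Finset (Fin a) := Finset.univ.filter fun h => S1 h ≠ 0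
def suppV (b : ℕ) (S2 : Fin b → ℕ) : Finset (Fin b) := Finset.univ.filter fun v => S2 v ≠ 0

/-!
Traverse `D_{a,b}` periodically as a walk that rises by one along each vertical edge and drops
by `S1 h` along each horizontal edge `h`. A subpath starting at `h` is balanced exactly when the
walk returns to its height before `h`; as the walk never rises by more than one, `v` lies outside
`sh(S1)` exactly when the height just after `v` is a strict record over the preceding period.
The strict records of such a walk are counted by the growth of its running maximum, here
`max(0, a2 - |S1|)`, so `|sh(S1)| = min(a2, |S1|)`.

For compatibility, (HGC) holds trivially when `S1 h = 0` or `v ∉ sh(h; S1)`, and (VGC) when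
`S2 v = 0`. Conversely, an edge `v` removed from the shadow after `h_d` is among the first
`S1 h_d` vertical edges following `h_d`: no subpath from `h_d` ending before `v` is balanced and
the path from `h_d` to `v` is vertical, so only (VGC) can hold, and it forces `S2 v = 0`.
Reading the path backwards with the axes swapped turns `D_{a1,a2}` into `D_{a2,a1}` and
exchanges the two kinds of grading, which gives the vertical statements.
-/

open Finset

section Geometry

variable {a b : ℕ}

lemma ht_mono {i j : Fin a} (h : i ≤ j) : ht a b i ≤ ht a b j :=
  Nat.div_le_div_right (Nat.mul_le_mul_right _ h)

lemma dep_mono {i j : Fin b} (h : i ≤ j) : dep a b i ≤ dep a b j :=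
  Nat.div_le_div_right <| Nat.sub_le_sub_right
    (Nat.add_le_add_right (Nat.mul_le_mul_right _ (Nat.succ_le_succ h)) _) _

lemma ht_le (j : Fin a) : ht a b j ≤ b :=
  Nat.div_le_of_le_mul (Nat.mul_le_mul_right b j.2.le)

lemma dep_le (i : Fin b) : dep a b i ≤ a := by
  have : (i.1 + 1) * a ≤ b * a := Nat.mul_le_mul_right a i.2
  have := i.pos
  rw [dep, ← Nat.lt_succ_iff, Nat.div_lt_iff_lt_mul i.pos, Nat.succ_mul a b, mul_comm a b]
  omega

/-- `h_j` comes before `v_i` on the path iff `ht j ≤ i` iff `j < dep i`. -/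
lemma ht_le_iff_lt_dep (j : Fin a) (i : Fin b) : ht a b j ≤ i ↔ j.1 < dep a b i := by
  have ha : 0 < a := j.pos
  have hb : 0 < b := i.pos
  rw [ht, dep, ← Nat.lt_succ_iff, Nat.div_lt_iff_lt_mul ha, Nat.lt_iff_add_one_le (m := j.1),
    Nat.le_div_iff_mul_le hb, Nat.succ_eq_add_one, add_mul j.1]
  omega

lemma pos_lt (e : Edge a b) : pos a b e < a + b := by
  cases e with
  | inl j => have := ht_le (b := b) j; have := j.2; simp only [pos]; omega
  | inr i => have := dep_le (a := a) i; have := i.2; simp only [pos]; omega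

lemma pos_inl_strictMono : StrictMono fun j : Fin a => pos a b (.inl j) := fun _ _ h => by
  have := ht_mono (b := b) h.le
  simp only [pos, Fin.lt_def] at h ⊢
  omega

lemma pos_inr_strictMono : StrictMono fun i : Fin b => pos a b (.inr i) := fun _ _ h => by
  have := dep_mono (a := a) h.le
  simp only [pos, Fin.lt_def] at h ⊢
  omega

lemma pos_inl_ne_pos_inr (j : Fin a) (i : Fin b) : pos a b (.inl j) ≠ pos a b (.inr i) := by
  have := ht_le_iff_lt_dep j i
  simp only [pos]
  omega

lemma pos_injective : Function.Injective (pos a b) := by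
  rintro (j | i) (j' | i') h
  · exact congrArg _ (pos_inl_strictMono.injective h)
  · exact absurd h (pos_inl_ne_pos_inr j i')
  · exact absurd h.symm (pos_inl_ne_pos_inr j' i)
  · exact congrArg _ (pos_inr_strictMono.injective h)

end Geometry

section CyclicDistance

variable {a b : ℕ}

lemma dd_eq (e f : Edge a b) :
    dd a b e f = if pos a b e ≤ pos a b f then pos a b f - pos a b e
      else pos a b f + (a + b) - pos a b e := by
  have he := pos_lt e
  have hf := pos_lt f
  unfold dd
  split_ifs with h
  · rw [show pos a b f + (a + b) - pos a b e = pos a b f - pos a b e + (a + b) by omega,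
      Nat.add_mod_right, Nat.mod_eq_of_lt (by omega)]
  · exact Nat.mod_eq_of_lt (by omega)

lemma dd_lt (e f : Edge a b) : dd a b e f < a + b := by
  have := pos_lt e; have := pos_lt f; rw [dd_eq]; split_ifs <;> omega

lemma dd_eq_zero_iff {e f : Edge a b} : dd a b e f = 0 ↔ e = f := by
  have := pos_lt e; have := pos_lt f
  rw [dd_eq]
  constructor
  · intro h; apply pos_injective; split_ifs at h <;> omega
  · rintro rfl; simp

lemma dd_self (e : Edge a b) : dd a b e e = 0 := dd_eq_zero_iff.2 rfl

lemma dd_inl_inr_pos (j : Fin a) (v : Fin b) : 0 < dd a b (.inl j) (.inr v) :=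
  Nat.pos_of_ne_zero fun h0 => by simpa using dd_eq_zero_iff.1 h0

lemma dd_injective (e : Edge a b) : Function.Injective (dd a b e) := fun f g h => by
  have := pos_lt e; have := pos_lt f; have := pos_lt g
  rw [dd_eq, dd_eq] at h
  apply pos_injective
  split_ifs at h <;> omega

lemma dd_add_dd (e f g : Edge a b) :
    dd a b e f + dd a b f g = dd a b e g ∨ dd a b e f + dd a b f g = dd a b e g + (a + b) := by
  have := pos_lt e; have := pos_lt f; have := pos_lt g
  rw [dd_eq e f, dd_eq f g, dd_eq e g]
  split_ifs <;> omega

lemma dd_lt_dd_iff (e f g : Edge a b) :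
    dd a b e f < dd a b e g ↔ 0 < dd a b f g ∧ dd a b f g ≤ dd a b e g := by
  have := dd_add_dd e f g; have := dd_lt e f; have := dd_lt f g
  omega

lemma dd_le_dd_iff (e f g : Edge a b) : dd a b e f ≤ dd a b e g ↔ dd a b f g ≤ dd a b e g := by
  have := dd_add_dd e f g; have := dd_lt e f; have := dd_lt f g
  omega

lemma dd_eq_iff {e f : Edge a b} {m : ℕ} (hm : m < a + b) :
    dd a b e f = m ↔ (pos a b e + m) % (a + b) = pos a b f := by
  have := pos_lt e; have := pos_lt f
  rw [Nat.add_mod_eq_ite, Nat.mod_eq_of_lt (pos_lt e), Nat.mod_eq_of_lt hm, dd_eq]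
  split_ifs <;> omega

lemma mem_subpath {e f g : Edge a b} : g ∈ subpath a b e f ↔ dd a b e g ≤ dd a b e f := by
  simp [subpath]

lemma subpath_self (e : Edge a b) : subpath a b e e = {e} := by
  ext g
  rw [mem_subpath, dd_self, Nat.le_zero, dd_eq_zero_iff, Finset.mem_singleton, eq_comm]

lemma card_subpath_le (e f : Edge a b) : #(subpath a b e f) ≤ dd a b e f + 1 := by
  simpa using Finset.card_le_card_of_injOn (t := range (dd a b e f + 1)) (dd a b e)
    (fun g hg => by simpa [Nat.lt_succ_iff, mem_subpath] using hg)
    (dd_injective e).injOn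

end CyclicDistance

section SkipFree

variable (W : ℕ → ℤ)

def prefixMax (k : ℕ) : ℤ := (range (k + 1)).sup' nonempty_range_add_one W

variable {W}

lemma le_prefixMax {i k : ℕ} (h : i ≤ k) : W i ≤ prefixMax W k :=
  le_sup' W (mem_range.2 (Nat.lt_succ_of_le h))

lemma prefixMax_lt_iff {k : ℕ} {c : ℤ} : prefixMax W k < c ↔ ∀ i ≤ k, W i < c := by
  simp [prefixMax, sup'_lt_iff]

lemma prefixMax_le_iff {k : ℕ} {c : ℤ} : prefixMax W k ≤ c ↔ ∀ i ≤ k, W i ≤ c := by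
  simp [prefixMax, sup'_le_iff]

lemma prefixMax_succ (q : ℕ) : prefixMax W (q + 1) = max (prefixMax W q) (W (q + 1)) := by
  simp only [prefixMax, range_add_one (n := q + 1), sup'_insert nonempty_range_add_one]
  exact sup_comm _ _

/-- If `W` never rises by more than one, then every strict record of `W` on `(p, q]` raises the
running maximum by exactly one, so the records are counted by the total rise of the maximum. -/
lemma card_records_eq (hW : ∀ k, W (k + 1) ≤ W k + 1) {p q : ℕ} (hpq : p ≤ q) :
    (#{m ∈ Ioc p q | ∀ i < m, W i < W m} : ℤ) = prefixMax W q - prefixMax W p := by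
  induction q, hpq using Nat.le_induction with
  | base => simp
  | succ q hpq ih =>
    have hrec : (∀ i < q + 1, W i < W (q + 1)) ↔ prefixMax W q < W (q + 1) := by
      rw [prefixMax_lt_iff]; simp only [Nat.lt_succ_iff]
    rw [← insert_Ioc_right_eq_Ioc_add_one hpq, filter_insert]
    have hstep := hW q
    have hq := le_prefixMax (W := W) (le_refl q)
    split_ifs with h
    · rw [card_insert_of_notMem (by simp)]
      rw [hrec] at h
      push_cast
      rw [ih, prefixMax_succ, max_eq_right h.le]
      omega
    · rw [hrec, not_lt] at h
      rw [ih, prefixMax_succ, max_eq_left h]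

variable {n : ℕ} {T : ℤ}

lemma prefixMax_add_period (hper : ∀ k, W (k + n) = W k + T) (hT : 0 ≤ T) {k : ℕ}
    (hk : n ≤ k) : prefixMax W (k + n) = prefixMax W k + T := by
  refine le_antisymm (prefixMax_le_iff.2 fun i hi => ?_) ?_
  · rcases le_or_gt n i with hni | hin
    · rw [show i = i - n + n by omega, hper]
      exact add_le_add_left (le_prefixMax (by omega)) T
    · exact (le_prefixMax (by omega)).trans (le_add_of_nonneg_right hT)
  · obtain ⟨i, hi, hmax⟩ := exists_mem_eq_sup' nonempty_range_add_one W
    rw [prefixMax, hmax, ← hper]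
    exact le_prefixMax (by simp at hi; omega)

lemma forall_lt_of_forall_Ico_lt (hper : ∀ k, W (k + n) = W k + T) (hT : 0 < T) {k : ℕ}
    (hk : k ≤ n) (h : ∀ i, k ≤ i → i < k + n → W i < W (k + n)) :
    ∀ i < k + n, W i < W (k + n) := by
  intro i hi
  rcases le_or_gt k i with hki | hik
  · exact h i hki hi
  · have := h (i + n) (by omega) (by omega)
    rw [hper] at this
    omega

lemma lt_of_forall_ne (hW : ∀ k, W (k + 1) ≤ W k + 1) {i d : ℕ} (h1 : W (i + 1) ≤ W i)
    (hne : ∀ j, 0 < j → j ≤ d → W (i + j) ≠ W i) : ∀ j, 0 < j → j ≤ d → W (i + j) < W i := by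
  intro j
  induction j with
  | zero => omega
  | succ j ih =>
    intro _ hj
    have hne := hne (j + 1) (by omega) hj
    rcases Nat.eq_zero_or_pos j with rfl | hj0
    · exact lt_of_le_of_ne h1 hne
    · have := ih hj0 (by omega)
      have := hW (i + j)
      rw [← add_assoc] at hne ⊢
      omega

lemma exists_last_ge {c : ℤ} {k N i₀ : ℕ} (hk : k ≤ i₀) (hN : i₀ ≤ N) (hc : c ≤ W i₀) :
    ∃ i, k ≤ i ∧ i ≤ N ∧ c ≤ W i ∧ ∀ j, i < j → j ≤ N → W j < c := by
  have hspec := Nat.findGreatest_spec (P := fun i => k ≤ i ∧ c ≤ W i) hN ⟨hk, hc⟩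
  refine ⟨_, hspec.1, Nat.findGreatest_le N, hspec.2, fun j h1 h2 => ?_⟩
  have := Nat.findGreatest_is_greatest h1 h2
  push Not at this
  exact this (hk.trans (Nat.le_findGreatest hN ⟨hk, hc⟩) |>.trans h1.le)

end SkipFree

section Walk

variable {a b : ℕ}

def posEquiv (a b : ℕ) : Edge a b ≃ Fin (a + b) :=
  Equiv.ofBijective (fun e => ⟨pos a b e, pos_lt e⟩) <| by
    rw [Fintype.bijective_iff_injective_and_card]
    exact ⟨fun e f h => pos_injective (Fin.val_eq_of_eq h), by simp⟩

/-- Chosen so that a subpath is balanced for `S1` iff its steps sum to zero. -/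
def step (S1 : Fin a → ℕ) : Edge a b → ℤ := Sum.elim (fun j => -(S1 j : ℤ)) fun _ => 1

lemma step_le_one (S1 : Fin a → ℕ) (e : Edge a b) : step S1 e ≤ 1 := by
  cases e <;> simp [step]

lemma cast_vcount_sub_hsum (S1 : Fin a → ℕ) (s : Finset (Edge a b)) :
    (vcount a b s : ℤ) - hsum a b S1 s = ∑ e ∈ s, step S1 e := by
  rw [vcount, hsum, card_filter]
  push_cast
  rw [← sum_sub_distrib]
  refine sum_congr rfl fun e _ => ?_
  cases e <;> simp [step]

variable [NeZero (a + b)]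

def edgeAt (a b : ℕ) [NeZero (a + b)] (p : ℕ) : Edge a b :=
  (posEquiv a b).symm (Fin.ofNat (a + b) p)

def walk (a b : ℕ) [NeZero (a + b)] (S1 : Fin a → ℕ) (k : ℕ) : ℤ :=
  ∑ p ∈ range k, step S1 (edgeAt a b p)

lemma pos_edgeAt (p : ℕ) : pos a b (edgeAt a b p) = p % (a + b) := by
  show (posEquiv a b ((posEquiv a b).symm (Fin.ofNat (a + b) p))).val = _
  rw [Equiv.apply_symm_apply]
  exact Fin.val_ofNat _ _

lemma edgeAt_eq_iff {p : ℕ} {e : Edge a b} : edgeAt a b p = e ↔ p % (a + b) = pos a b e := by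
  rw [← pos_edgeAt]
  exact pos_injective.eq_iff.symm

lemma edgeAt_pos (e : Edge a b) : edgeAt a b (pos a b e) = e :=
  edgeAt_eq_iff.2 (Nat.mod_eq_of_lt (pos_lt e))

lemma edgeAt_add_period (p : ℕ) : edgeAt a b (a + b + p) = edgeAt a b p := by
  rw [edgeAt_eq_iff, pos_edgeAt, Nat.add_mod_left]

lemma edgeAt_pos_add_period (e : Edge a b) : edgeAt a b (pos a b e + (a + b)) = e := by
  rw [add_comm, edgeAt_add_period, edgeAt_pos]

lemma edgeAt_pos_add_sub_dd (e f : Edge a b) :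
    edgeAt a b (pos a b f + (a + b) - dd a b e f) = e := by
  have := pos_lt e
  have := pos_lt f
  rw [edgeAt_eq_iff, dd_eq]
  split_ifs
  · rw [show pos a b f + (a + b) - (pos a b f - pos a b e) = pos a b e + (a + b) by omega,
      Nat.add_mod_right, Nat.mod_eq_of_lt (pos_lt e)]
  · rw [show pos a b f + (a + b) - (pos a b f + (a + b) - pos a b e) = pos a b e by omega,
      Nat.mod_eq_of_lt (pos_lt e)]

lemma edgeAt_add_dd {i : ℕ} {e : Edge a b} (hi : edgeAt a b i = e) (f : Edge a b) :
    edgeAt a b (i + dd a b e f) = f := by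
  rw [edgeAt_eq_iff, ← Nat.mod_add_mod, edgeAt_eq_iff.1 hi]
  exact (dd_eq_iff (dd_lt e f)).1 rfl

lemma dd_edgeAt_add {i m : ℕ} {e : Edge a b} (hi : edgeAt a b i = e) (hm : m < a + b) :
    dd a b e (edgeAt a b (i + m)) = m := by
  rw [dd_eq_iff hm, pos_edgeAt, ← edgeAt_eq_iff.1 hi, Nat.mod_add_mod]

lemma walk_succ (S1 : Fin a → ℕ) (k : ℕ) :
    walk a b S1 (k + 1) = walk a b S1 k + step S1 (edgeAt a b k) :=
  sum_range_succ _ _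

lemma walk_succ_of_edgeAt_eq_inl (S1 : Fin a → ℕ) {k : ℕ} {j : Fin a}
    (hk : edgeAt a b k = .inl j) : walk a b S1 (k + 1) = walk a b S1 k - S1 j := by
  rw [walk_succ, hk, step, Sum.elim_inl, sub_eq_add_neg]

lemma walk_succ_of_edgeAt_eq_inr (S1 : Fin a → ℕ) {k : ℕ} {i : Fin b}
    (hk : edgeAt a b k = .inr i) : walk a b S1 (k + 1) = walk a b S1 k + 1 := by
  rw [walk_succ, hk, step, Sum.elim_inr]

lemma walk_succ_le (S1 : Fin a → ℕ) (k : ℕ) : walk a b S1 (k + 1) ≤ walk a b S1 k + 1 := by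
  rw [walk_succ]
  linarith [step_le_one S1 (edgeAt a b k)]

lemma walk_add_period (S1 : Fin a → ℕ) (k : ℕ) :
    walk a b S1 (k + (a + b)) = walk a b S1 k + walk a b S1 (a + b) := by
  rw [walk, add_comm k, sum_range_add, add_comm]
  simp only [edgeAt_add_period, walk]

lemma walk_period (S1 : Fin a → ℕ) : walk a b S1 (a + b) = b - ∑ j, (S1 j : ℤ) := by
  rw [walk, sum_range]
  simp only [edgeAt, Fin.ofNat_val_eq_self]
  rw [Equiv.sum_comp (posEquiv a b).symm (step S1), Fintype.sum_sum_type]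
  simp [step, sub_eq_neg_add]

lemma sum_step_subpath (S1 : Fin a → ℕ) {i : ℕ} {e : Edge a b} (hi : edgeAt a b i = e)
    (f : Edge a b) :
    ∑ g ∈ subpath a b e f, step S1 g = walk a b S1 (i + dd a b e f + 1) - walk a b S1 i := by
  have himage : subpath a b e f = (range (dd a b e f + 1)).image (fun m => edgeAt a b (i + m)) := by
    ext g
    simp only [mem_subpath, mem_image, mem_range, Nat.lt_succ_iff]
    constructor
    · exact fun hg => ⟨dd a b e g, hg, edgeAt_add_dd hi g⟩
    · rintro ⟨m, hm, rfl⟩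
      rwa [dd_edgeAt_add hi (hm.trans_lt (dd_lt e f))]
  have hinj : Set.InjOn (fun m => edgeAt a b (i + m)) (range (dd a b e f + 1)) := by
    intro m hm m' hm' h
    simp only [coe_range, Set.mem_Iio] at hm hm'
    have := dd_lt e f
    rw [← dd_edgeAt_add hi (m := m) (by omega), ← dd_edgeAt_add hi (m := m') (by omega)]
    exact congrArg _ h
  rw [himage, sum_image hinj, walk, walk, add_assoc, sum_range_add _ i, add_sub_cancel_left]

lemma balH_iff_walk (S1 : Fin a → ℕ) {i : ℕ} {h : Fin a} (hi : edgeAt a b i = .inl h)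
    (e : Edge a b) :
    balH a b S1 h e ↔ walk a b S1 (i + dd a b (.inl h) e + 1) = walk a b S1 i := by
  rw [balH, ← @Nat.cast_inj ℤ, ← sub_eq_zero, cast_vcount_sub_hsum, sum_step_subpath S1 hi,
    sub_eq_zero]

end Walk

section Shadow

variable {a b : ℕ} [NeZero (a + b)]

lemma mem_shH_iff_walk (S1 : Fin a → ℕ) {i : ℕ} {h : Fin a} (hi : edgeAt a b i = .inl h)
    (v : Fin b) :
    v ∈ shH a b S1 h ↔
      ∀ j, 0 < j → j ≤ dd a b (.inl h) (.inr v) → walk a b S1 (i + j) < walk a b S1 i := by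
  set d := dd a b (.inl h) (.inr v)
  have hdn : d < a + b := dd_lt _ _
  have hbal : (∀ e, balH a b S1 h e → d ≤ dd a b (.inl h) e) ↔
      ∀ j, 0 < j → j ≤ d → walk a b S1 (i + j) ≠ walk a b S1 i := by
    constructor
    · intro H j hj hjd heq
      have hj' : dd a b (.inl h) (edgeAt a b (i + (j - 1))) = j - 1 := dd_edgeAt_add hi (by omega)
      have := H _ <| (balH_iff_walk S1 hi _).2 <| by
        rwa [hj', show i + (j - 1) + 1 = i + j by omega]
      omega
    · intro H e he
      by_contra hlt
      exact H (dd a b (.inl h) e + 1) (by omega) (by omega)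
        (by rw [← add_assoc]; exact (balH_iff_walk S1 hi e).1 he)
  simp only [shH, mem_filter, mem_univ, true_and]
  rw [hbal]
  have hfirst : walk a b S1 (i + 1) ≤ walk a b S1 i := by
    rw [walk_succ_of_edgeAt_eq_inl S1 hi]
    omega
  exact ⟨lt_of_forall_ne (walk_succ_le S1) hfirst, fun H j hj hjd => (H j hj hjd).ne⟩

lemma exists_walk_ge_of_mem_shadowH (S1 : Fin a → ℕ) {v : Fin b} (hv : v ∈ shadowH a b S1) :
    ∃ i, pos a b (.inr v) + 1 ≤ i ∧ i < pos a b (.inr v) + 1 + (a + b) ∧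
      walk a b S1 (pos a b (.inr v) + 1 + (a + b)) ≤ walk a b S1 i := by
  simp only [shadowH, mem_filter, mem_univ, true_and] at hv
  obtain ⟨h, hh⟩ := hv
  have hd0 := dd_inl_inr_pos h v
  have hdn := dd_lt (.inl h) (.inr v)
  have hlt := (mem_shH_iff_walk S1 (edgeAt_pos_add_sub_dd (.inl h) (.inr v)) v).1 hh
  generalize dd a b (.inl h) (.inr v) = d at hd0 hdn hlt
  have hup := walk_succ_le (b := b) S1 (pos a b (.inr v) + (a + b) - d + d)
  rw [show pos a b (.inr v) + (a + b) - d + d + 1 = pos a b (.inr v) + 1 + (a + b) by omega] at hup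
  have := hlt d hd0 le_rfl
  exact ⟨pos a b (.inr v) + (a + b) - d, by omega, by omega, by omega⟩

lemma mem_shadowH_of_walk_ge (S1 : Fin a → ℕ) {v : Fin b} {i₀ : ℕ}
    (hi₀k : pos a b (.inr v) + 1 ≤ i₀) (hi₀n : i₀ < pos a b (.inr v) + 1 + (a + b))
    (hi₀ : walk a b S1 (pos a b (.inr v) + 1 + (a + b)) ≤ walk a b S1 i₀) :
    v ∈ shadowH a b S1 := by
  set k := pos a b (.inr v) + 1
  -- the last height in the period that is at least the final one starts a horizontal edge
  obtain ⟨i, hki, hle, hge, hafter⟩ := exists_last_ge hi₀k (Nat.le_sub_one_of_lt hi₀n) hi₀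
  have hv : edgeAt a b (k + (a + b) - 1) = .inr v := by
    rw [show k + (a + b) - 1 = pos a b (.inr v) + (a + b) by omega, edgeAt_pos_add_period]
  have hlast := walk_succ_of_edgeAt_eq_inr S1 hv
  rw [show k + (a + b) - 1 + 1 = k + (a + b) by omega] at hlast
  have hil : i < k + (a + b) - 1 := by
    rcases Nat.lt_or_eq_of_le hle with h | h
    · exact h
    · rw [h] at hge; omega
  have hdrop := (hafter (i + 1) (by omega) (by omega)).trans_le hge
  obtain ⟨h, hh⟩ : ∃ h, edgeAt a b i = .inl h := by
    rcases hE : edgeAt a b i with h | w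
    · exact ⟨h, rfl⟩
    · rw [walk_succ_of_edgeAt_eq_inr S1 hE] at hdrop
      omega
  have hd : dd a b (.inl h) (.inr v) = k + (a + b) - 1 - i := by
    have := dd_edgeAt_add hh (m := k + (a + b) - 1 - i) (by omega)
    rwa [show i + (k + (a + b) - 1 - i) = k + (a + b) - 1 by omega, hv] at this
  simp only [shadowH, mem_filter, mem_univ, true_and]
  refine ⟨h, (mem_shH_iff_walk S1 hh v).2 fun j hj hjd => ?_⟩
  exact (hafter (i + j) (by omega) (by omega)).trans_le hge

lemma not_mem_shadowH_iff (S1 : Fin a → ℕ) (hT : 0 < walk a b S1 (a + b)) (v : Fin b) :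
    v ∉ shadowH a b S1 ↔ ∀ i < pos a b (.inr v) + 1 + (a + b),
      walk a b S1 i < walk a b S1 (pos a b (.inr v) + 1 + (a + b)) := by
  refine ⟨fun hv => forall_lt_of_forall_Ico_lt (walk_add_period S1) hT (pos_lt (.inr v))
    fun i h1 h2 => ?_, fun H hv => ?_⟩
  · by_contra hle
    exact hv (mem_shadowH_of_walk_ge S1 h1 h2 (not_lt.1 hle))
  · obtain ⟨i, -, hi, hle⟩ := exists_walk_ge_of_mem_shadowH S1 hv
    exact (H i hi).not_ge hle

lemma shadowH_eq_univ (S1 : Fin a → ℕ) (hT : walk a b S1 (a + b) ≤ 0) :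
    shadowH a b S1 = univ := by
  refine eq_univ_of_forall fun v => mem_shadowH_of_walk_ge S1 le_rfl
    (by have := Nat.pos_of_neZero (a + b); omega) ?_
  rw [walk_add_period]
  omega

lemma card_compl_shadowH_eq_card_records (S1 : Fin a → ℕ) (hT : 0 < walk a b S1 (a + b)) :
    #(univ \ shadowH a b S1) =
      #{m ∈ Ioc (a + b) (a + b + (a + b)) | ∀ i < m, walk a b S1 i < walk a b S1 m} := by
  refine card_nbij (fun v => pos a b (.inr v) + 1 + (a + b)) (fun v hv => ?_) ?_ ?_
  · have := pos_lt (.inr v : Edge a b)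
    dsimp only
    rw [mem_coe, mem_sdiff] at hv
    rw [mem_coe, mem_filter, mem_Ioc]
    exact ⟨⟨by omega, by omega⟩, (not_mem_shadowH_iff S1 hT v).1 hv.2⟩
  · intro v _ w _ hvw
    exact Sum.inr_injective (pos_injective (by simpa using hvw))
  · intro m hm
    rw [mem_coe, mem_filter, mem_Ioc] at hm
    obtain ⟨⟨hnm, hm2⟩, hrec⟩ := hm
    -- a record is reached by an up-step, i.e. along a vertical edge
    obtain ⟨w, hw⟩ : ∃ w, edgeAt a b (m - 1) = .inr w := by
      rcases hE : edgeAt a b (m - 1) with j | w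
      · have := walk_succ_of_edgeAt_eq_inl S1 hE
        rw [show m - 1 + 1 = m by omega] at this
        have := hrec (m - 1) (by omega)
        omega
      · exact ⟨w, rfl⟩
    have hpos : pos a b (.inr w) = m - 1 - (a + b) := by
      rw [← hw, pos_edgeAt, Nat.mod_eq_sub_mod (by omega), Nat.mod_eq_of_lt (by omega)]
    refine ⟨w, ?_, by simp only [hpos]; omega⟩
    rw [mem_coe, mem_sdiff, not_mem_shadowH_iff S1 hT, hpos,
      show m - 1 - (a + b) + 1 + (a + b) = m by omega]
    exact ⟨mem_univ w, hrec⟩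

lemma card_compl_shadowH (S1 : Fin a → ℕ) : #(univ \ shadowH a b S1) = b - ∑ j, S1 j := by
  have hT : walk a b S1 (a + b) = b - ∑ j, (S1 j : ℤ) := walk_period S1
  rw [← Nat.cast_sum] at hT
  rcases le_or_gt (walk a b S1 (a + b)) 0 with hT0 | hT0
  · rw [shadowH_eq_univ S1 hT0, sdiff_self, bot_eq_empty, card_empty]
    omega
  have hrecords := card_records_eq (walk_succ_le (b := b) S1) (Nat.le_add_right (a + b) (a + b))
  rw [prefixMax_add_period (walk_add_period S1) hT0.le le_rfl, add_sub_cancel_left,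
    ← card_compl_shadowH_eq_card_records S1 hT0] at hrecords
  omega

end Shadow

lemma card_shadowH {a b : ℕ} (S1 : Fin a → ℕ) : #(shadowH a b S1) = min b (∑ h, S1 h) := by
  rcases Nat.eq_zero_or_pos b with rfl | hb
  · simp [eq_empty_of_isEmpty (shadowH a 0 S1)]
  have : NeZero (a + b) := ⟨by omega⟩
  have hcompl := card_compl_shadowH (b := b) S1
  rw [card_univ_sdiff, Fintype.card_fin] at hcompl
  have := card_le_univ (shadowH a b S1)
  rw [Fintype.card_fin] at this
  omega

section Compatibility

variable {a b : ℕ}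

lemma HGC_of_eq_zero (S1 : Fin a → ℕ) {h : Fin a} (v : Fin b) (hz : S1 h = 0) :
    HGC a b S1 h v :=
  ⟨.inl h, by rw [dd_self]; exact dd_inl_inr_pos h v, by simp [subpath_self, vcount, hsum, hz]⟩

lemma VGC_of_eq_zero (S2 : Fin b → ℕ) (h : Fin a) {v : Fin b} (hz : S2 v = 0) :
    VGC a b S2 h v :=
  ⟨.inr v, dd_inl_inr_pos h v, le_rfl, by simp [subpath_self, hcount, vsum, hz]⟩

lemma le_hsum_of_mem (S1 : Fin a → ℕ) {s : Finset (Edge a b)} {j : Fin a} (hj : .inl j ∈ s) :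
    S1 j ≤ hsum a b S1 s :=
  single_le_sum (f := Sum.elim S1 fun _ => 0) (fun _ _ => Nat.zero_le _) hj

lemma le_vsum_of_mem (S2 : Fin b → ℕ) {s : Finset (Edge a b)} {i : Fin b} (hi : .inr i ∈ s) :
    S2 i ≤ vsum a b S2 s :=
  single_le_sum (f := Sum.elim (fun _ => 0) S2) (fun _ _ => Nat.zero_le _) hi

lemma vcount_subpath_inl_le (j : Fin a) (e : Edge a b) :
    vcount a b (subpath a b (.inl j) e) ≤ dd a b (.inl j) e := by
  have hmem : (.inl j : Edge a b) ∈ subpath a b (.inl j) e := mem_subpath.2 (by simp [dd_self])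
  have hsub : (subpath a b (.inl j) e).filter (fun g => g.isRight = true) ⊆
      (subpath a b (.inl j) e).erase (.inl j) := fun g hg => by
    rw [mem_filter] at hg
    exact mem_erase.2 ⟨by rintro rfl; simp at hg, hg.1⟩
  have := card_le_card hsub
  rw [card_erase_of_mem hmem] at this
  have := card_subpath_le (.inl j) e
  rw [vcount]
  omega

lemma card_filter_dep_eq_lt {j : Fin a} {v : Fin b} (hv : dep a b v = j.1 + 1) :
    #{v' : Fin b | dep a b v' = dep a b v ∧ v'.1 < v.1} = v.1 - ht a b j := by
  have hjv : ht a b j ≤ v := (ht_le_iff_lt_dep j v).2 (by omega)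
  have hIco : ({v' : Fin b | dep a b v' = dep a b v ∧ v'.1 < v.1} : Finset (Fin b)) =
      Ico ⟨ht a b j, by omega⟩ v := by
    ext v'
    simp only [mem_filter, mem_univ, true_and, mem_Ico, Fin.le_def, Fin.lt_def]
    have := ht_le_iff_lt_dep j v'
    constructor
    · rintro ⟨hd, hlt⟩
      exact ⟨this.2 (by omega), hlt⟩
    · rintro ⟨hle, hlt⟩
      exact ⟨le_antisymm (dep_mono (Fin.le_def.2 hlt.le)) (by omega), hlt⟩
  rw [hIco, Fin.card_Ico]

lemma mem_removedH_iff (S1 : Fin a → ℕ) {v : Fin b} :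
    v ∈ removedH a b S1 ↔ ∃ j : Fin a, dep a b v = j.1 + 1 ∧ v.1 - ht a b j < S1 j := by
  simp only [removedH, mem_filter, mem_univ, true_and]
  refine exists_congr fun j => ⟨fun ⟨hj, hc⟩ => ⟨hj.symm, ?_⟩, fun ⟨hj, hc⟩ => ⟨hj.symm, ?_⟩⟩
  · rwa [← card_filter_dep_eq_lt hj.symm]
  · rwa [card_filter_dep_eq_lt hj]

section RemovedEdges

variable {j : Fin a} {v : Fin b}

lemma dd_eq_of_dep_eq (hv : dep a b v = j.1 + 1) :
    dd a b (.inl j) (.inr v) = v.1 - ht a b j + 1 := by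
  have := (ht_le_iff_lt_dep j v).2 (by omega)
  rw [dd_eq]
  split_ifs <;> simp only [pos] at * <;> omega

lemma isRight_of_dd_le (hv : dep a b v = j.1 + 1) {g : Edge a b} (h0 : 0 < dd a b (.inl j) g)
    (hle : dd a b (.inl j) g ≤ dd a b (.inl j) (.inr v)) : g.isRight := by
  rcases g with j' | w
  · have := ht_le_iff_lt_dep j v
    have := ht_le_iff_lt_dep j' v
    have := pos_lt (.inr v : Edge a b)
    have hmono : j' ≤ j → ht a b j' ≤ ht a b j := ht_mono
    rw [dd_eq, dd_eq] at *
    split_ifs at * <;> simp only [pos, Fin.le_def] at * <;> omega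
  · rfl

lemma hcount_subpath_eq_zero (hv : dep a b v = j.1 + 1) {e : Edge a b}
    (h0 : 0 < dd a b (.inl j) e) (hle : dd a b (.inl j) e ≤ dd a b (.inl j) (.inr v)) :
    hcount a b (subpath a b e (.inr v)) = 0 := by
  rw [hcount, card_eq_zero, filter_eq_empty_iff]
  intro g hg
  rw [mem_subpath] at hg
  have := dd_add_dd (.inl j) e (.inr v)
  have := dd_add_dd (.inl j) e g
  have := dd_lt (.inl j) (.inr v)
  have := dd_lt e (.inr v)
  have hright := isRight_of_dd_le hv (g := g) (by omega) (by omega)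
  rcases g with _ | _ <;> simp_all

end RemovedEdges

lemma eq_zero_of_mem_removedH {S1 : Fin a → ℕ} {S2 : Fin b → ℕ} (hC : Compatible a b S1 S2)
    {v : Fin b} (hv : v ∈ removedH a b S1) : S2 v = 0 := by
  obtain ⟨j, hdep, hlt⟩ := (mem_removedH_iff S1).1 hv
  have hd := dd_eq_of_dep_eq hdep
  rcases hC j v with ⟨e, he, hbal⟩ | ⟨e, h0, hle, hbal⟩
  · have := vcount_subpath_inl_le j e
    have := le_hsum_of_mem S1 (mem_subpath.2 (by simp [dd_self]) : .inl j ∈ subpath a b (.inl j) e)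
    omega
  · have := hcount_subpath_eq_zero hdep h0 hle
    have := le_vsum_of_mem S2 (mem_subpath.2 le_rfl : .inr v ∈ subpath a b e (.inr v))
    omega

theorem compatible_iff_shadowH (S1 : Fin a → ℕ) (S2 : Fin b → ℕ) :
    Compatible a b S1 S2 ↔
      ((∀ v ∈ shadowH a b S1, v ∉ rshH a b S1 → S2 v = 0) ∧
        ∀ h ∈ suppH a S1, ∀ v ∈ rshH a b S1, HGC a b S1 h v ∨ VGC a b S2 h v) := by
  constructor
  · intro hC
    refine ⟨fun v hsh hnr => eq_zero_of_mem_removedH hC ?_, fun h _ v _ => hC h v⟩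
    by_contra hrem
    exact hnr (mem_sdiff.2 ⟨hsh, hrem⟩)
  · rintro ⟨hzero, hrsh⟩ h v
    by_cases hS : S1 h = 0
    · exact .inl (HGC_of_eq_zero S1 v hS)
    by_cases hsh : v ∈ shadowH a b S1
    · by_cases hr : v ∈ rshH a b S1
      · exact hrsh h (by simpa [suppH] using hS) v hr
      · exact .inr (VGC_of_eq_zero S2 h (hzero v hsh hr))
    · simp only [shadowH, shH, mem_filter, mem_univ, true_and, not_exists, not_forall,
        not_le] at hsh
      obtain ⟨e, hbal, hlt⟩ := hsh h
      exact .inl ⟨e, hlt, hbal⟩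

end Compatibility

section Duality

variable {a b : ℕ}

/-- Reading `D_{a,b}` backwards with the axes swapped gives `D_{b,a}`. -/
def reflect : Edge a b → Edge b a
  | .inl j => .inr j.rev
  | .inr i => .inl i.rev

@[simp] lemma reflect_inl (j : Fin a) : reflect (.inl j : Edge a b) = .inr j.rev := rfl

@[simp] lemma reflect_inr (i : Fin b) : reflect (.inr i : Edge a b) = .inl i.rev := rfl

@[simp] lemma reflect_reflect (e : Edge a b) : reflect (reflect e) = e := by
  cases e <;> simp

lemma reflect_injective : Function.Injective (reflect : Edge a b → Edge b a) :=
  Function.LeftInverse.injective reflect_reflect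

lemma reflect_surjective : Function.Surjective (reflect : Edge a b → Edge b a) :=
  Function.RightInverse.surjective reflect_reflect

lemma ceil_div_add_div_eq {c d x y : ℕ} (hc : 0 < c) (hxy : x + y = c * d) :
    (x + c - 1) / c + y / c = d := by
  have hdm := Nat.div_add_mod y c
  have hr := Nat.mod_lt y hc
  have hqd : y / c ≤ d := Nat.div_le_of_le_mul (by omega)
  have hmul : c * d = c * (d - y / c) + c * (y / c) := by
    rw [← Nat.mul_add, Nat.sub_add_cancel hqd]
  have hx : x + c - 1 = c * (d - y / c) + (c - 1 - y % c) := by omega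
  rw [hx, Nat.mul_add_div hc, Nat.div_eq_of_lt (by omega : c - 1 - y % c < c)]
  omega

lemma dep_add_ht_rev (i : Fin b) : dep a b i + ht b a i.rev = a := by
  refine ceil_div_add_div_eq i.pos ?_
  rw [Fin.val_rev, ← add_mul]
  congr 1
  omega

lemma dep_rev_add_ht (j : Fin a) : dep b a j.rev + ht a b j = b := by
  simpa using dep_add_ht_rev (a := b) j.rev

lemma pos_reflect (e : Edge a b) : pos b a (reflect e) = a + b - 1 - pos a b e := by
  cases e with
  | inl j =>
    have := dep_rev_add_ht (b := b) j
    have := ht_le (b := b) j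
    have := j.2
    simp only [reflect, pos, Fin.val_rev]
    omega
  | inr i =>
    have := dep_add_ht_rev (a := a) i
    have := dep_le (a := a) i
    have := i.2
    simp only [reflect, pos, Fin.val_rev]
    omega

lemma dd_reflect (e f : Edge a b) : dd b a (reflect f) (reflect e) = dd a b e f := by
  have := pos_lt e
  have := pos_lt f
  rw [dd_eq, dd_eq, pos_reflect, pos_reflect]
  split_ifs <;> omega

lemma subpath_reflect (e f : Edge a b) :
    subpath b a (reflect f) (reflect e) = (subpath a b e f).image reflect := by
  ext g'
  obtain ⟨g, rfl⟩ := reflect_surjective g'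
  rw [reflect_injective.mem_finset_image, mem_subpath, mem_subpath, dd_reflect, dd_reflect,
    dd_le_dd_iff e g f]

lemma hcount_image_reflect (s : Finset (Edge a b)) :
    hcount b a (s.image reflect) = vcount a b s := by
  rw [hcount, vcount, filter_image, card_image_of_injective _ reflect_injective]
  congr 1
  exact filter_congr fun e _ => by cases e <;> rfl

lemma vsum_image_reflect (S1 : Fin a → ℕ) (s : Finset (Edge a b)) :
    vsum b a (S1 ∘ Fin.rev) (s.image reflect) = hsum a b S1 s := by
  rw [vsum, hsum, sum_image reflect_injective.injOn]
  exact sum_congr rfl fun e _ => by cases e <;> simp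

lemma balH_iff_balV_reflect (S1 : Fin a → ℕ) (h : Fin a) (e : Edge a b) :
    balH a b S1 h e ↔ balV b a (S1 ∘ Fin.rev) (reflect e) h.rev := by
  rw [balH, balV, ← reflect_inl, subpath_reflect, hcount_image_reflect, vsum_image_reflect]

lemma balV_iff_balH_reflect (S2 : Fin b → ℕ) (e : Edge a b) (v : Fin b) :
    balV a b S2 e v ↔ balH b a (S2 ∘ Fin.rev) v.rev (reflect e) := by
  simpa [Function.comp_def] using (balH_iff_balV_reflect (S2 ∘ Fin.rev) v.rev (reflect e)).symm

lemma HGC_iff_VGC_reflect (S1 : Fin a → ℕ) (h : Fin a) (v : Fin b) :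
    HGC a b S1 h v ↔ VGC b a (S1 ∘ Fin.rev) v.rev h.rev := by
  rw [HGC, VGC, (reflect_surjective (a := a) (b := b)).exists]
  refine exists_congr fun e => ?_
  have he : dd b a (.inl v.rev) (reflect e) = dd a b e (.inr v) := dd_reflect e (.inr v)
  have hv : dd b a (.inl v.rev) (.inr h.rev) = dd a b (.inl h) (.inr v) :=
    dd_reflect (.inl h) (.inr v)
  rw [he, hv, ← and_assoc, dd_lt_dd_iff]
  exact and_congr_right' (balH_iff_balV_reflect S1 h e)

lemma VGC_iff_HGC_reflect (S2 : Fin b → ℕ) (h : Fin a) (v : Fin b) :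
    VGC a b S2 h v ↔ HGC b a (S2 ∘ Fin.rev) v.rev h.rev := by
  simpa [Function.comp_def] using (HGC_iff_VGC_reflect (S2 ∘ Fin.rev) v.rev h.rev).symm

lemma compatible_iff_reflect (S1 : Fin a → ℕ) (S2 : Fin b → ℕ) :
    Compatible a b S1 S2 ↔ Compatible b a (S2 ∘ Fin.rev) (S1 ∘ Fin.rev) := by
  constructor
  · intro hC v h
    have := hC h.rev v.rev
    rwa [HGC_iff_VGC_reflect S1, VGC_iff_HGC_reflect S2, Fin.rev_rev, Fin.rev_rev, or_comm] at this
  · intro hC h v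
    rw [HGC_iff_VGC_reflect S1, VGC_iff_HGC_reflect S2]
    exact (hC v.rev h.rev).symm

lemma mem_shV_iff_reflect (S2 : Fin b → ℕ) (h : Fin a) (v : Fin b) :
    h ∈ shV a b S2 v ↔ h.rev ∈ shH b a (S2 ∘ Fin.rev) v.rev := by
  simp only [shV, shH, mem_filter, mem_univ, true_and]
  rw [(reflect_surjective (a := a) (b := b)).forall]
  refine forall_congr' fun e => ?_
  have he : dd b a (.inl v.rev) (reflect e) = dd a b e (.inr v) := dd_reflect e (.inr v)
  have hv : dd b a (.inl v.rev) (.inr h.rev) = dd a b (.inl h) (.inr v) :=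
    dd_reflect (.inl h) (.inr v)
  rw [he, hv, balV_iff_balH_reflect]

lemma mem_shadowV_iff_reflect (S2 : Fin b → ℕ) (h : Fin a) :
    h ∈ shadowV a b S2 ↔ h.rev ∈ shadowH b a (S2 ∘ Fin.rev) := by
  simp only [shadowV, shadowH, mem_filter, mem_univ, true_and, mem_shV_iff_reflect]
  exact ⟨fun ⟨v, hv⟩ => ⟨_, hv⟩, fun ⟨w, hw⟩ => ⟨w.rev, by rwa [Fin.rev_rev]⟩⟩

lemma card_filter_ht_eq_lt (h : Fin a) :
    #{h' : Fin a | ht a b h' = ht a b h ∧ h.1 < h'.1} =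
      #{h' : Fin a | dep b a h' = dep b a h.rev ∧ h'.1 < h.rev.1} := by
  refine card_equiv Fin.revPerm fun h' => ?_
  have := dep_rev_add_ht (b := b) h
  have := dep_rev_add_ht (b := b) h'
  have := ht_le (b := b) h
  have := ht_le (b := b) h'
  simp only [mem_filter, mem_univ, true_and, Fin.revPerm_apply, ← Fin.lt_def, Fin.rev_lt_rev]
  omega

lemma mem_removedV_iff_reflect (S2 : Fin b → ℕ) (h : Fin a) :
    h ∈ removedV a b S2 ↔ h.rev ∈ removedH b a (S2 ∘ Fin.rev) := by
  simp only [removedV, removedH, mem_filter, mem_univ, true_and, card_filter_ht_eq_lt]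
  rw [Fin.rev_surjective.exists]
  refine exists_congr fun vl => ?_
  have := dep_rev_add_ht (b := b) h
  have := ht_le (b := b) h
  have := vl.2
  simp only [Function.comp_apply, Fin.val_rev]
  omega

lemma mem_rshV_iff_reflect (S2 : Fin b → ℕ) (h : Fin a) :
    h ∈ rshV a b S2 ↔ h.rev ∈ rshH b a (S2 ∘ Fin.rev) := by
  rw [rshV, rshH, mem_sdiff, mem_sdiff, mem_shadowV_iff_reflect, mem_removedV_iff_reflect]

theorem compatible_iff_shadowV (S1 : Fin a → ℕ) (S2 : Fin b → ℕ) :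
    Compatible a b S1 S2 ↔
      ((∀ h ∈ shadowV a b S2, h ∉ rshV a b S2 → S1 h = 0) ∧
        ∀ v ∈ suppV b S2, ∀ h ∈ rshV a b S2, HGC a b S1 h v ∨ VGC a b S2 h v) := by
  rw [compatible_iff_reflect, compatible_iff_shadowH]
  refine and_congr ?_ ?_
  · rw [Fin.rev_surjective.forall]
    simp [← mem_shadowV_iff_reflect, ← mem_rshV_iff_reflect]
  · rw [Fin.rev_surjective.forall]
    refine forall_congr' fun v => ?_
    rw [Fin.rev_surjective.forall]
    simp [suppH, suppV, ← mem_rshV_iff_reflect, ← HGC_iff_VGC_reflect, ← VGC_iff_HGC_reflect,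
      or_comm]

theorem card_shadowV (S2 : Fin b → ℕ) : #(shadowV a b S2) = min a (∑ v, S2 v) := by
  rw [card_equiv Fin.revPerm (t := shadowH b a (S2 ∘ Fin.rev)) (mem_shadowV_iff_reflect S2),
    card_shadowH]
  congr 1
  exact Equiv.sum_comp Fin.revPerm S2

end Duality

/-- **Shadows control compatibility.**
(i) `S2 ∈ C(S1)` iff `S2` vanishes on `sh(S1) ∖ rsh(S1)` and one of (HGC), (VGC)
holds for every `h ∈ supp(S1)` and `v ∈ rsh(S1)`; (ii) `|sh(S1)| = min(a2, |S1|)`.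
Symmetrically for vertical gradings. -/
theorem shadows_lemma (a1 a2 : ℕ) :
    (∀ (S1 : Fin a1 → ℕ) (S2 : Fin a2 → ℕ),
      Compatible a1 a2 S1 S2 ↔
        ((∀ v ∈ shadowH a1 a2 S1, v ∉ rshH a1 a2 S1 → S2 v = 0) ∧
          ∀ h ∈ suppH a1 S1, ∀ v ∈ rshH a1 a2 S1, HGC a1 a2 S1 h v ∨ VGC a1 a2 S2 h v)) ∧
    (∀ S1 : Fin a1 → ℕ, (shadowH a1 a2 S1).card = min a2 (∑ h, S1 h)) ∧
    (∀ (S1 : Fin a1 → ℕ) (S2 : Fin a2 → ℕ),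
      Compatible a1 a2 S1 S2 ↔
        ((∀ h ∈ shadowV a1 a2 S2, h ∉ rshV a1 a2 S2 → S1 h = 0) ∧
          ∀ v ∈ suppV a2 S2, ∀ h ∈ rshV a1 a2 S2, HGC a1 a2 S1 h v ∨ VGC a1 a2 S2 h v)) ∧
    (∀ S2 : Fin a2 → ℕ, (shadowV a1 a2 S2).card = min a1 (∑ v, S2 v)) :=
  ⟨compatible_iff_shadowH, card_shadowH, compatible_iff_shadowV, card_shadowV⟩

end Dyck
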